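/- Let n, r be natural numbers with 1 < r < n − 1. Then at least one of the following holds: g(n,r) ≤ g(n−1, r−1) + g(n−1, r), or g(n,r) = C(n−1, r−1), or g(n,r) = C(n−1, r). -/

import Mathlib

open Classical in
/-- `s_r(A, α)`: the number of `r`-element subsets of `A` whose sum lies in `ℚ + α`. -/
noncomputable def shiftRatCount (A : Finset ℝ) (r : ℕ) (α : ℝ) : ℕ :=
  ((A.powersetCard r).filter (fun B => ∃ q : ℚ, (∑ x ∈ B, x) = (q : ℝ) + α)).card

/-- `g n r`: the maximum of `s_r(A, α)` over all `α ∈ ℝ` and all `n`-element sets `A` of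
irrational real numbers that are not entirely contained in `ℚ + α/r`. -/
noncomputable def maxShiftRatSum (n r : ℕ) : ℕ :=
  sSup {k : ℕ | ∃ α : ℝ, ∃ A : Finset ℝ, A.card = n ∧ (∀ x ∈ A, Irrational x) ∧
    ¬ (∀ x ∈ A, ∃ q : ℚ, x = (q : ℝ) + α / (r : ℝ)) ∧ shiftRatCount A r α = k}

open Classical in
lemma shiftRatCount_split (A : Finset ℝ) (a : ℝ) (ha : a ∈ A) (r : ℕ) (hr : 1 ≤ r) (α : ℝ) :
    shiftRatCount A r α
      = shiftRatCount (A.erase a) (r - 1) (α - a) + shiftRatCount (A.erase a) r α := by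
  simp only [shiftRatCount]
  rw [← Finset.card_filter_add_card_filter_not
    (s := (A.powersetCard r).filter (fun B => ∃ q : ℚ, (∑ x ∈ B, x) = (q : ℝ) + α))
    (p := fun B : Finset ℝ => a ∈ B)]
  congr 1
  · apply Finset.card_bij (fun B _ => B.erase a)
    · intro B hB
      simp only [Finset.mem_filter, Finset.mem_powersetCard] at hB ⊢
      obtain ⟨⟨⟨hBA, hBc⟩, q, hq⟩, haB⟩ := hB
      refine ⟨⟨Finset.erase_subset_erase a hBA, ?_⟩, q, ?_⟩
      · rw [Finset.card_erase_of_mem haB, hBc]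
      · rw [Finset.sum_erase_eq_sub haB, hq]; ring
    · intro B₁ h₁ B₂ h₂ he
      simp only [Finset.mem_filter] at h₁ h₂
      rw [← Finset.insert_erase h₁.2, ← Finset.insert_erase h₂.2, he]
    · intro C hC
      simp only [Finset.mem_filter, Finset.mem_powersetCard, Finset.subset_erase] at hC
      obtain ⟨⟨⟨hCA, haC⟩, hCc⟩, q, hq⟩ := hC
      refine ⟨insert a C, ?_, Finset.erase_insert haC⟩
      simp only [Finset.mem_filter, Finset.mem_powersetCard]
      refine ⟨⟨⟨Finset.insert_subset ha hCA, ?_⟩, q, ?_⟩, Finset.mem_insert_self a C⟩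
      · rw [Finset.card_insert_of_notMem haC, hCc]; omega
      · rw [Finset.sum_insert haC, hq]; ring
  · congr 1
    ext B
    simp only [Finset.mem_filter, Finset.mem_powersetCard, Finset.subset_erase]
    tauto

lemma shiftRatCount_le (A : Finset ℝ) (r : ℕ) (α : ℝ) :
    shiftRatCount A r α ≤ A.card.choose r := by
  classical
  calc shiftRatCount A r α ≤ (A.powersetCard r).card := Finset.card_filter_le _ _
    _ = A.card.choose r := Finset.card_powersetCard r A

lemma mem_bddAbove (n r : ℕ) : BddAbove {k : ℕ | ∃ α : ℝ, ∃ A : Finset ℝ, A.card = n ∧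
    (∀ x ∈ A, Irrational x) ∧
    ¬ (∀ x ∈ A, ∃ q : ℚ, x = (q : ℝ) + α / (r : ℝ)) ∧ shiftRatCount A r α = k} := by
  refine ⟨n.choose r, ?_⟩
  rintro k ⟨α, A, hA, -, -, hk⟩
  rw [← hk, ← hA]
  exact shiftRatCount_le A r α

theorem g_recursion_two (n r : ℕ) (hr : 1 < r) (hn : r < n - 1) :
    maxShiftRatSum n r ≤ maxShiftRatSum (n - 1) (r - 1) + maxShiftRatSum (n - 1) r ∨
    maxShiftRatSum n r = Nat.choose (n - 1) (r - 1) ∨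
    maxShiftRatSum n r = Nat.choose (n - 1) r := by
  left
  apply csSup_le'
  rintro k ⟨α, A, hAcard, hirr, hnot, hk⟩
  have hn4 : 4 ≤ n := by omega
  -- a bad element b
  push_neg at hnot
  obtain ⟨b, hbA, hb⟩ := hnot
  have hrR : ((r - 1 : ℕ) : ℝ) = (r : ℝ) - 1 := by
    have : (1:ℕ) ≤ r := hr.le
    push_cast [Nat.cast_sub this]
    ring
  have hr0 : (r : ℝ) ≠ 0 := by positivity
  have ht0 : (r : ℝ) - 1 ≠ 0 := by
    have : (2:ℝ) ≤ r := by exact_mod_cast hr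
    linarith
  -- key: there is a ∈ A with both non-degeneracy conditions
  have key : ∃ a ∈ A, (∃ x ∈ A.erase a, ∀ q : ℚ, x ≠ (q : ℝ) + α / (r : ℝ)) ∧
      (∃ x ∈ A.erase a, ∀ q : ℚ, x ≠ (q : ℝ) + (α - a) / ((r - 1 : ℕ) : ℝ)) := by
    by_contra hcon
    push_neg at hcon
    -- pick a1 ≠ a2 in A.erase b
    have h2lt : 1 < (A.erase b).card := by
      rw [Finset.card_erase_of_mem hbA, hAcard]; omega
    obtain ⟨a1, ha1, a2, ha2, h12⟩ := Finset.one_lt_card.mp h2lt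
    have ha1A : a1 ∈ A := Finset.mem_of_mem_erase ha1
    have ha2A : a2 ∈ A := Finset.mem_of_mem_erase ha2
    have hb1 : b ≠ a1 := fun h => (Finset.ne_of_mem_erase ha1) h.symm
    have hb2 : b ≠ a2 := fun h => (Finset.ne_of_mem_erase ha2) h.symm
    have H1 := hcon a1 ha1A ⟨b, Finset.mem_erase.mpr ⟨hb1, hbA⟩, hb⟩
    have H2 := hcon a2 ha2A ⟨b, Finset.mem_erase.mpr ⟨hb2, hbA⟩, hb⟩
    obtain ⟨q1, hq1⟩ := H1 a2 (Finset.mem_erase.mpr ⟨h12.symm, ha2A⟩)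
    obtain ⟨q2, hq2⟩ := H2 a1 (Finset.mem_erase.mpr ⟨h12, ha1A⟩)
    obtain ⟨q3, hq3⟩ := H1 b (Finset.mem_erase.mpr ⟨hb1, hbA⟩)
    obtain ⟨q4, hq4⟩ := H2 b (Finset.mem_erase.mpr ⟨hb2, hbA⟩)
    rw [hrR] at hq1 hq2 hq3 hq4
    apply hb ((q3 + q4) / 2 - (q1 + q2) / (2 * (r : ℚ)))
    have hr0' : ((r : ℚ) : ℝ) ≠ 0 := by push_cast; exact hr0
    push_cast
    field_simp at hq1 hq2 hq3 hq4 ⊢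
    have key : (2 * b * (r:ℝ)) * ((r:ℝ) - 1)
        = ((↑q3 + ↑q4) * (r:ℝ) - (↑q1 + ↑q2) + 2 * α) * ((r:ℝ) - 1) := by
      linear_combination (r:ℝ) * hq3 + (r:ℝ) * hq4 - hq1 - hq2
    have key2 := mul_right_cancel₀ ht0 key
    linear_combination key2
  obtain ⟨a, haA, ⟨x1, hx1, hx1'⟩, ⟨x2, hx2, hx2'⟩⟩ := key
  have hsplit := shiftRatCount_split A a haA r hr.le α
  have hmem1 : shiftRatCount (A.erase a) (r - 1) (α - a) ∈
      {k : ℕ | ∃ β : ℝ, ∃ B : Finset ℝ, B.card = n - 1 ∧ (∀ x ∈ B, Irrational x) ∧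
        ¬ (∀ x ∈ B, ∃ q : ℚ, x = (q : ℝ) + β / ((r - 1 : ℕ) : ℝ)) ∧
        shiftRatCount B (r - 1) β = k} := by
    refine ⟨α - a, A.erase a, ?_, fun x hx => hirr x (Finset.mem_of_mem_erase hx), ?_, rfl⟩
    · rw [Finset.card_erase_of_mem haA, hAcard]
    · intro h
      obtain ⟨q, hq⟩ := h x2 hx2
      exact hx2' q hq
  have hmem2 : shiftRatCount (A.erase a) r α ∈
      {k : ℕ | ∃ β : ℝ, ∃ B : Finset ℝ, B.card = n - 1 ∧ (∀ x ∈ B, Irrational x) ∧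
        ¬ (∀ x ∈ B, ∃ q : ℚ, x = (q : ℝ) + β / (r : ℝ)) ∧ shiftRatCount B r β = k} := by
    refine ⟨α, A.erase a, ?_, fun x hx => hirr x (Finset.mem_of_mem_erase hx), ?_, rfl⟩
    · rw [Finset.card_erase_of_mem haA, hAcard]
    · intro h
      obtain ⟨q, hq⟩ := h x1 hx1
      exact hx1' q hq
  have hle1 : shiftRatCount (A.erase a) (r - 1) (α - a) ≤ maxShiftRatSum (n - 1) (r - 1) :=
    le_csSup (mem_bddAbove (n - 1) (r - 1)) hmem1
  have hle2 : shiftRatCount (A.erase a) r α ≤ maxShiftRatSum (n - 1) r :=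
    le_csSup (mem_bddAbove (n - 1) r) hmem2
  omega
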